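/- Let 0 < α < 1 and β > 0, let φ be an analytic self-map of the open unit disk D, and let g be analytic on D. Then the operator V_gC_φ, defined by (V_gC_φ f)(z) = ∫₀^z f'(φ(ξ)) g(ξ) dξ, is bounded from Z^α to Z^β if and only if g' ∈ H_{v_β}^∞ and sup_{z∈D} (1−|z|²)^β |g(z)φ'(z)| / (1−|φ(z)|²)^α < ∞. -/

import Mathlib

noncomputable section

/-- The open unit disk in the complex plane. -/
def uD : Set ℂ := Metric.ball 0 1

/-- The Zygmund-type quantity `(1-|z|^2)^a * |f''(z)|`. -/
def zygS (a : ℝ) (f : ℂ → ℂ) (z : ℂ) : ℝ := (1 - ‖z‖ ^ 2) ^ a * ‖deriv (deriv f) z‖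

/-- Membership in the Zygmund-type space `Z^a`. -/
def memZ (a : ℝ) (f : ℂ → ℂ) : Prop :=
  AnalyticOn ℂ f uD ∧ ∃ M : ℝ, ∀ z ∈ uD, zygS a f z ≤ M

/-- The Zygmund-type norm `‖f‖_{Z^a} = |f 0| + |f' 0| + sup_{z ∈ D} (1-|z|^2)^a |f''(z)|`. -/
def zNorm (a : ℝ) (f : ℂ → ℂ) : ℝ := ‖f 0‖ + ‖deriv f 0‖ + sSup (zygS a f '' uD)

/-- Membership in the weighted space `H^∞_{v_b}` (for `u` analytic on `uD`). -/
def memHv (b : ℝ) (u : ℂ → ℂ) : Prop :=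
  ∃ M : ℝ, ∀ z ∈ uD, (1 - ‖z‖ ^ 2) ^ b * ‖u z‖ ≤ M

/-- `T` is a bounded operator from `Z^a` to `Z^b`. -/
def boundedOp (a b : ℝ) (T : (ℂ → ℂ) → ℂ → ℂ) : Prop :=
  (∀ f, memZ a f → memZ b (T f)) ∧
    ∃ C > 0, ∀ f, memZ a f → zNorm b (T f) ≤ C * zNorm a f

/-- `(V_g C_φ f)(z) = ∫₀^z f'(φ(ξ)) g(ξ) dξ`, parametrized along the segment from `0` to `z`. -/
def VgCphi (g φ : ℂ → ℂ) (f : ℂ → ℂ) : ℂ → ℂ :=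
  fun z => ∫ t in (0:ℝ)..1, z * (deriv f (φ ((t : ℂ) * z)) * g ((t : ℂ) * z))

/-!
Write `T = V_g C_φ`. Then `(T f)'' = f''(φ) φ' g + f'(φ) g'`, and for `α < 1` every `f ∈ Z^α`
satisfies `|f'| ≤ (1-α)⁻¹ ‖f‖_{Z^α}` on the disk, so sufficiency is the triangle inequality.
For necessity, `f(z) = z` gives `g' ∈ H^∞_{v_β}`. Given `z`, the test function `f_a` with `a = φ(z)`,
`f_a(0) = f_a'(0) = 0` and `f_a''(w) = (1-|a|²)(1-āw)^{-(1+α)}` has `Z^α` norm bounded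
independently of `a` and `(1-|a|²)^α |f_a''(a)| = 1`; the bound on `(T f_a)''(z)` then controls
`(1-|z|²)^β |g(z) φ'(z)| / (1-|φ(z)|²)^α`, the term `f_a'(a) g'(z)` being already controlled.
-/

open Set Metric MeasureTheory intervalIntegral Filter Topology ComplexConjugate

lemma mem_uD {z : ℂ} : z ∈ uD ↔ ‖z‖ < 1 := mem_ball_zero_iff

lemma isOpen_uD : IsOpen uD := isOpen_ball

lemma zero_mem_uD : (0 : ℂ) ∈ uD := mem_uD.2 (by simp)

lemma ofReal_mul_mem_uD {z : ℂ} (hz : z ∈ uD) {t : ℝ} (ht : t ∈ Icc (0 : ℝ) 1) :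
    (t : ℂ) * z ∈ uD := by
  rw [mem_uD] at hz ⊢
  rw [norm_mul, Complex.norm_real, Real.norm_of_nonneg ht.1]
  exact (mul_le_of_le_one_left (norm_nonneg z) ht.2).trans_lt hz

lemma one_sub_norm_sq_pos {z : ℂ} (hz : z ∈ uD) : 0 < 1 - ‖z‖ ^ 2 := by
  have := mem_uD.1 hz
  nlinarith [norm_nonneg z]

lemma zygS_nonneg {a : ℝ} {f : ℂ → ℂ} {z : ℂ} (hz : z ∈ uD) : 0 ≤ zygS a f z :=
  mul_nonneg (Real.rpow_nonneg (one_sub_norm_sq_pos hz).le a) (norm_nonneg _)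

lemma sSup_zygS_nonneg (a : ℝ) (f : ℂ → ℂ) : 0 ≤ sSup (zygS a f '' uD) :=
  Real.sSup_nonneg (by rintro _ ⟨z, hz, rfl⟩; exact zygS_nonneg hz)

lemma zNorm_nonneg (a : ℝ) (f : ℂ → ℂ) : 0 ≤ zNorm a f := by
  unfold zNorm
  have := sSup_zygS_nonneg a f
  positivity

lemma zygS_le_sSup {a : ℝ} {f : ℂ → ℂ} (hf : memZ a f) {z : ℂ} (hz : z ∈ uD) :
    zygS a f z ≤ sSup (zygS a f '' uD) := by
  obtain ⟨-, M, hM⟩ := hf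
  exact le_csSup ⟨M, by rintro _ ⟨w, hw, rfl⟩; exact hM w hw⟩ (mem_image_of_mem _ hz)

lemma zygS_le_zNorm {a : ℝ} {f : ℂ → ℂ} (hf : memZ a f) {z : ℂ} (hz : z ∈ uD) :
    zygS a f z ≤ zNorm a f := by
  unfold zNorm
  linarith [zygS_le_sSup hf hz, norm_nonneg (f 0), norm_nonneg (deriv f 0)]

/-- `∫₀^z h(ξ) dξ` along the segment from `0` to `z`. -/
def segPrimitive (h : ℂ → ℂ) (z : ℂ) : ℂ := ∫ t in (0:ℝ)..1, z * h ((t : ℂ) * z)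

lemma segPrimitive_zero (h : ℂ → ℂ) : segPrimitive h 0 = 0 := by simp [segPrimitive]

lemma segPrimitive_eq_sub {F h : ℂ → ℂ} (hF : ∀ w ∈ uD, HasDerivAt F (h w) w)
    (hh : ContinuousOn h uD) {z : ℂ} (hz : z ∈ uD) : segPrimitive h z = F z - F 0 := by
  have hseg : ∀ t ∈ uIcc (0:ℝ) 1, (t : ℂ) * z ∈ uD := fun t ht =>
    ofReal_mul_mem_uD hz (by rwa [uIcc_of_le zero_le_one] at ht)
  have hderiv : ∀ t ∈ uIcc (0:ℝ) 1,
      HasDerivAt (fun s : ℝ => F ((s : ℂ) * z)) (z * h ((t : ℂ) * z)) t := by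
    intro t ht
    have hline : HasDerivAt (fun s : ℝ => (s : ℂ) * z) z t := by
      simpa using (Complex.ofRealCLM.hasDerivAt (x := t)).mul_const z
    exact ((hF _ (hseg t ht)).comp t hline).congr_deriv (mul_comm _ _)
  have hint : IntervalIntegrable (fun t : ℝ => z * h ((t : ℂ) * z)) volume 0 1 :=
    (continuousOn_const.mul (hh.comp (by fun_prop) hseg)).intervalIntegrable
  have := integral_eq_sub_of_hasDerivAt hderiv hint
  simp only [Complex.ofReal_one, one_mul, Complex.ofReal_zero, zero_mul] at this
  exact this

lemma hasDerivAt_segPrimitive {h : ℂ → ℂ} (hh : AnalyticOnNhd ℂ h uD) {z : ℂ} (hz : z ∈ uD) :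
    HasDerivAt (segPrimitive h) (h z) z := by
  obtain ⟨F, hF⟩ := hh.differentiableOn.isExactOn_ball
  have heq : segPrimitive h =ᶠ[𝓝 z] fun w => F w - F 0 :=
    eventuallyEq_of_mem (isOpen_uD.mem_nhds hz) fun w hw =>
      segPrimitive_eq_sub hF hh.continuousOn hw
  exact ((hF z hz).sub_const (F 0)).congr_of_eventuallyEq heq

lemma analyticOnNhd_segPrimitive {h : ℂ → ℂ} (hh : AnalyticOnNhd ℂ h uD) :
    AnalyticOnNhd ℂ (segPrimitive h) uD :=
  DifferentiableOn.analyticOnNhd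
    (fun _ hz => (hasDerivAt_segPrimitive hh hz).differentiableAt.differentiableWithinAt)
    isOpen_uD

lemma deriv_segPrimitive {h : ℂ → ℂ} (hh : AnalyticOnNhd ℂ h uD) {z : ℂ} (hz : z ∈ uD) :
    deriv (segPrimitive h) z = h z :=
  (hasDerivAt_segPrimitive hh hz).deriv

lemma deriv_deriv_segPrimitive {h : ℂ → ℂ} (hh : AnalyticOnNhd ℂ h uD) {z : ℂ} (hz : z ∈ uD) :
    deriv (deriv (segPrimitive h)) z = deriv h z :=
  (eventuallyEq_of_mem (isOpen_uD.mem_nhds hz) fun _ hw => deriv_segPrimitive hh hw).deriv_eq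

lemma intervalIntegrable_one_sub_rpow_neg {α : ℝ} (hα1 : α < 1) :
    IntervalIntegrable (fun t : ℝ => (1 - t) ^ (-α)) volume 0 1 := by
  simpa using ((intervalIntegrable_rpow' (a := 0) (b := 1) (r := -α) (by linarith)).comp_sub_left
    1).symm

lemma integral_one_sub_rpow_neg {α : ℝ} (hα1 : α < 1) :
    ∫ t in (0:ℝ)..1, (1 - t) ^ (-α) = (1 - α)⁻¹ := by
  rw [intervalIntegral.integral_comp_sub_left (fun t : ℝ => t ^ (-α)),
    integral_rpow (Or.inl (by linarith))]
  have : -α + 1 ≠ 0 := by linarith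
  simp [Real.zero_rpow this, sub_eq_neg_add]

lemma one_sub_le_one_sub_norm_ofReal_mul_sq {w : ℂ} (hw : w ∈ uD) {t : ℝ}
    (ht : t ∈ Icc (0 : ℝ) 1) : 1 - t ≤ 1 - ‖(t : ℂ) * w‖ ^ 2 := by
  rw [norm_mul, Complex.norm_real, Real.norm_of_nonneg ht.1]
  have hw1 : ‖w‖ ^ 2 ≤ 1 := pow_le_one₀ (norm_nonneg w) (mem_uD.1 hw).le
  nlinarith [mul_le_mul_of_nonneg_left hw1 (sq_nonneg t), ht.1, ht.2]

/-- Integrate `|f''(tw)| ≤ S (1-t)^{-α}` along the radius; `α < 1` makes the bound integrable. -/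
lemma norm_deriv_sub_deriv_zero_le {f : ℂ → ℂ} (hf : AnalyticOnNhd ℂ f uD) {α S : ℝ}
    (hα0 : 0 ≤ α) (hα1 : α < 1) (hS : ∀ z ∈ uD, zygS α f z ≤ S) {w : ℂ} (hw : w ∈ uD) :
    ‖deriv f w - deriv f 0‖ ≤ (1 - α)⁻¹ * S := by
  have hS0 : 0 ≤ S := (zygS_nonneg zero_mem_uD).trans (hS 0 zero_mem_uD)
  have hbound : ∀ᵐ t : ℝ, t ∈ Ioc (0:ℝ) 1 →
      ‖w * deriv (deriv f) ((t : ℂ) * w)‖ ≤ S * (1 - t) ^ (-α) := by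
    filter_upwards [Measure.ae_ne volume 1] with t ht1 ht
    have ht' : t ∈ Icc (0:ℝ) 1 := Ioc_subset_Icc_self ht
    have hpos := one_sub_norm_sq_pos (ofReal_mul_mem_uD hw ht')
    have hd : ‖deriv (deriv f) ((t : ℂ) * w)‖ ≤ S * (1 - ‖(t : ℂ) * w‖ ^ 2) ^ (-α) := by
      rw [Real.rpow_neg hpos.le, ← div_eq_mul_inv, le_div_iff₀ (Real.rpow_pos_of_pos hpos α),
        mul_comm]
      exact hS _ (ofReal_mul_mem_uD hw ht')
    have hweight : (1 - ‖(t : ℂ) * w‖ ^ 2) ^ (-α) ≤ (1 - t) ^ (-α) :=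
      Real.rpow_le_rpow_of_nonpos (by linarith [lt_of_le_of_ne ht.2 ht1])
        (one_sub_le_one_sub_norm_ofReal_mul_sq hw ht') (by linarith)
    calc ‖w * deriv (deriv f) ((t : ℂ) * w)‖
        ≤ 1 * (S * (1 - ‖(t : ℂ) * w‖ ^ 2) ^ (-α)) := by
          rw [norm_mul]; exact mul_le_mul (mem_uD.1 hw).le hd (norm_nonneg _) zero_le_one
      _ ≤ S * (1 - t) ^ (-α) := by rw [one_mul]; exact mul_le_mul_of_nonneg_left hweight hS0
  have hFTC : segPrimitive (deriv (deriv f)) w = deriv f w - deriv f 0 :=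
    segPrimitive_eq_sub (fun z hz => (hf.deriv z hz).differentiableAt.hasDerivAt)
      hf.deriv.deriv.continuousOn hw
  rw [← hFTC]
  calc ‖segPrimitive (deriv (deriv f)) w‖ ≤ ∫ t in (0:ℝ)..1, S * (1 - t) ^ (-α) :=
        norm_integral_le_of_norm_le zero_le_one hbound
          ((intervalIntegrable_one_sub_rpow_neg hα1).const_mul S)
    _ = (1 - α)⁻¹ * S := by
        rw [intervalIntegral.integral_const_mul, integral_one_sub_rpow_neg hα1, mul_comm]

lemma norm_deriv_le_zNorm {α : ℝ} (hα0 : 0 ≤ α) (hα1 : α < 1) {f : ℂ → ℂ} (hf : memZ α f)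
    {w : ℂ} (hw : w ∈ uD) : ‖deriv f w‖ ≤ (1 - α)⁻¹ * zNorm α f := by
  have hfN := (isOpen_uD.analyticOn_iff_analyticOnNhd).1 hf.1
  have hsub := norm_deriv_sub_deriv_zero_le hfN hα0 hα1 (fun z hz => zygS_le_sSup hf hz) hw
  have hK : 1 ≤ (1 - α)⁻¹ := (one_le_inv₀ (by linarith)).2 (by linarith)
  calc ‖deriv f w‖ ≤ ‖deriv f 0‖ + ‖deriv f w - deriv f 0‖ := norm_le_norm_add_norm_sub' _ _
    _ ≤ ‖deriv f 0‖ + (1 - α)⁻¹ * sSup (zygS α f '' uD) := by gcongr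
    _ ≤ (1 - α)⁻¹ * zNorm α f := by
        unfold zNorm
        nlinarith [norm_nonneg (f 0), norm_nonneg (deriv f 0)]

section VgCphi

variable {g φ f : ℂ → ℂ}

lemma VgCphi_eq_segPrimitive : VgCphi g φ f = segPrimitive (fun w => deriv f (φ w) * g w) := rfl

lemma VgCphi_zero : VgCphi g φ f 0 = 0 := by simp [VgCphi]

lemma analyticOnNhd_VgCphi_integrand (hf : AnalyticOnNhd ℂ f uD) (hφ : AnalyticOnNhd ℂ φ uD)
    (hφm : MapsTo φ uD uD) (hg : AnalyticOnNhd ℂ g uD) :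
    AnalyticOnNhd ℂ (fun w => deriv f (φ w) * g w) uD :=
  (hf.deriv.comp hφ hφm).mul hg

lemma analyticOnNhd_VgCphi (hf : AnalyticOnNhd ℂ f uD) (hφ : AnalyticOnNhd ℂ φ uD)
    (hφm : MapsTo φ uD uD) (hg : AnalyticOnNhd ℂ g uD) :
    AnalyticOnNhd ℂ (VgCphi g φ f) uD :=
  analyticOnNhd_segPrimitive (analyticOnNhd_VgCphi_integrand hf hφ hφm hg)

lemma deriv_VgCphi (hf : AnalyticOnNhd ℂ f uD) (hφ : AnalyticOnNhd ℂ φ uD)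
    (hφm : MapsTo φ uD uD) (hg : AnalyticOnNhd ℂ g uD) {z : ℂ} (hz : z ∈ uD) :
    deriv (VgCphi g φ f) z = deriv f (φ z) * g z :=
  deriv_segPrimitive (analyticOnNhd_VgCphi_integrand hf hφ hφm hg) hz

lemma deriv_deriv_VgCphi (hf : AnalyticOnNhd ℂ f uD) (hφ : AnalyticOnNhd ℂ φ uD)
    (hφm : MapsTo φ uD uD) (hg : AnalyticOnNhd ℂ g uD) {z : ℂ} (hz : z ∈ uD) :
    deriv (deriv (VgCphi g φ f)) z =
      deriv (deriv f) (φ z) * deriv φ z * g z + deriv f (φ z) * deriv g z := by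
  rw [VgCphi_eq_segPrimitive,
    deriv_deriv_segPrimitive (analyticOnNhd_VgCphi_integrand hf hφ hφm hg) hz]
  have hcomp : HasDerivAt (fun w => deriv f (φ w)) (deriv (deriv f) (φ z) * deriv φ z) z :=
    (hf.deriv _ (hφm hz)).differentiableAt.hasDerivAt.comp z
      (hφ z hz).differentiableAt.hasDerivAt
  exact (hcomp.mul (hg z hz).differentiableAt.hasDerivAt).deriv

end VgCphi

lemma one_sub_norm_mul_norm_le {a w : ℂ} : 1 - ‖a‖ * ‖w‖ ≤ ‖1 - conj a * w‖ := by
  simpa [norm_mul] using norm_sub_norm_le (1 : ℂ) (conj a * w)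

lemma re_one_sub_conj_mul_pos {a w : ℂ} (ha : a ∈ uD) (hw : w ∈ uD) :
    0 < (1 - conj a * w).re := by
  have hre : (conj a * w).re ≤ ‖a‖ * ‖w‖ := by
    simpa [norm_mul] using Complex.re_le_norm (conj a * w)
  have := mul_lt_one_of_nonneg_of_lt_one_left (norm_nonneg a) (mem_uD.1 ha) (mem_uD.1 hw).le
  simp only [Complex.sub_re, Complex.one_re]
  linarith

lemma one_sub_sq_le_two_mul_one_sub_mul {x y : ℝ} (hx : 0 ≤ x) (hx1 : x ≤ 1) (hy1 : y ≤ 1) :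
    1 - x ^ 2 ≤ 2 * (1 - x * y) := by
  nlinarith

def testKernel (α : ℝ) (a w : ℂ) : ℂ :=
  ((1 - ‖a‖ ^ 2 : ℝ) : ℂ) * (1 - conj a * w) ^ ((-(α + 1) : ℝ) : ℂ)

section testKernel

variable {α : ℝ} {a : ℂ}

lemma analyticOnNhd_testKernel (ha : a ∈ uD) : AnalyticOnNhd ℂ (testKernel α a) uD :=
  DifferentiableOn.analyticOnNhd (fun _ hw =>
    (((differentiableAt_const _).sub (differentiableAt_id.const_mul _)).cpow
      (differentiableAt_const _)
      (Complex.mem_slitPlane_iff.2 (Or.inl (re_one_sub_conj_mul_pos ha hw)))).const_mul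
      _ |>.differentiableWithinAt) isOpen_uD

lemma norm_testKernel (ha : a ∈ uD) {w : ℂ} (hw : w ∈ uD) :
    ‖testKernel α a w‖ = (1 - ‖a‖ ^ 2) * ‖1 - conj a * w‖ ^ (-(α + 1)) := by
  have hne : 1 - conj a * w ≠ 0 := fun h => by
    simpa [h] using re_one_sub_conj_mul_pos ha hw
  rw [testKernel, norm_mul, Complex.norm_real, Real.norm_of_nonneg (one_sub_norm_sq_pos ha).le,
    Complex.norm_cpow_of_ne_zero hne]
  simp

lemma norm_testKernel_self (ha : a ∈ uD) : ‖testKernel α a a‖ = (1 - ‖a‖ ^ 2) ^ (-α) := by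
  have hpos := one_sub_norm_sq_pos ha
  have hself : ‖1 - conj a * a‖ = 1 - ‖a‖ ^ 2 := by
    rw [mul_comm, Complex.mul_conj, Complex.normSq_eq_norm_sq, ← Complex.ofReal_one,
      ← Complex.ofReal_sub, Complex.norm_real, Real.norm_of_nonneg hpos.le]
  rw [norm_testKernel ha ha, hself, show -α = 1 + -(α + 1) by ring, Real.rpow_add hpos,
    Real.rpow_one]

/-- Both `1 - |w|²` and `1 - |a|²` are at most `2 |1 - ā w|`. -/
lemma weighted_norm_testKernel_le (hα0 : 0 ≤ α) (ha : a ∈ uD) {w : ℂ} (hw : w ∈ uD) :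
    (1 - ‖w‖ ^ 2) ^ α * ‖testKernel α a w‖ ≤ 2 ^ α * 2 := by
  set X := ‖1 - conj a * w‖
  have ha1 := (mem_uD.1 ha).le
  have hw1 := (mem_uD.1 hw).le
  have hX : 0 < X := (re_one_sub_conj_mul_pos ha hw).trans_le (Complex.re_le_norm _)
  have hwX : (1 - ‖w‖ ^ 2) / X ≤ 2 := (div_le_iff₀ hX).2 <| by
    linarith [one_sub_sq_le_two_mul_one_sub_mul (norm_nonneg w) hw1 ha1, mul_comm ‖a‖ ‖w‖,
      one_sub_norm_mul_norm_le (a := a) (w := w)]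
  have haX : (1 - ‖a‖ ^ 2) / X ≤ 2 := (div_le_iff₀ hX).2 <| by
    linarith [one_sub_sq_le_two_mul_one_sub_mul (norm_nonneg a) ha1 hw1,
      one_sub_norm_mul_norm_le (a := a) (w := w)]
  have hsplit : (1 - ‖w‖ ^ 2) ^ α * ‖testKernel α a w‖ =
      ((1 - ‖w‖ ^ 2) / X) ^ α * ((1 - ‖a‖ ^ 2) / X) := by
    rw [norm_testKernel ha hw, Real.div_rpow (one_sub_norm_sq_pos hw).le hX.le,
      neg_add, Real.rpow_add hX, Real.rpow_neg hX.le, Real.rpow_neg_one]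
    ring
  rw [hsplit]
  have := one_sub_norm_sq_pos hw
  have := one_sub_norm_sq_pos ha
  gcongr

end testKernel

def testFn (α : ℝ) (a : ℂ) : ℂ → ℂ := segPrimitive (segPrimitive (testKernel α a))

section testFn

variable {α : ℝ} {a : ℂ}

lemma analyticOnNhd_testFn (ha : a ∈ uD) : AnalyticOnNhd ℂ (testFn α a) uD :=
  analyticOnNhd_segPrimitive (analyticOnNhd_segPrimitive (analyticOnNhd_testKernel ha))

lemma deriv_testFn (ha : a ∈ uD) {w : ℂ} (hw : w ∈ uD) :
    deriv (testFn α a) w = segPrimitive (testKernel α a) w :=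
  deriv_segPrimitive (analyticOnNhd_segPrimitive (analyticOnNhd_testKernel ha)) hw

lemma deriv_deriv_testFn (ha : a ∈ uD) {w : ℂ} (hw : w ∈ uD) :
    deriv (deriv (testFn α a)) w = testKernel α a w := by
  rw [testFn, deriv_deriv_segPrimitive (analyticOnNhd_segPrimitive (analyticOnNhd_testKernel ha)) hw,
    deriv_segPrimitive (analyticOnNhd_testKernel ha) hw]

lemma zygS_testFn_le (hα0 : 0 ≤ α) (ha : a ∈ uD) {w : ℂ} (hw : w ∈ uD) :
    zygS α (testFn α a) w ≤ 2 ^ α * 2 := by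
  rw [zygS, deriv_deriv_testFn ha hw]
  exact weighted_norm_testKernel_le hα0 ha hw

lemma memZ_testFn (hα0 : 0 ≤ α) (ha : a ∈ uD) : memZ α (testFn α a) :=
  ⟨(isOpen_uD.analyticOn_iff_analyticOnNhd).2 (analyticOnNhd_testFn ha), _,
    fun _ hw => zygS_testFn_le hα0 ha hw⟩

lemma zNorm_testFn_le (hα0 : 0 ≤ α) (ha : a ∈ uD) : zNorm α (testFn α a) ≤ 2 ^ α * 2 := by
  rw [zNorm, deriv_testFn ha zero_mem_uD, testFn, segPrimitive_zero, segPrimitive_zero,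
    norm_zero, zero_add, zero_add]
  exact csSup_le ((nonempty_of_mem zero_mem_uD).image _)
    (by rintro _ ⟨w, hw, rfl⟩; exact zygS_testFn_le hα0 ha hw)

lemma norm_deriv_testFn_le (hα0 : 0 ≤ α) (hα1 : α < 1) (ha : a ∈ uD) {w : ℂ} (hw : w ∈ uD) :
    ‖deriv (testFn α a) w‖ ≤ (1 - α)⁻¹ * (2 ^ α * 2) := by
  simpa [deriv_testFn ha zero_mem_uD, segPrimitive_zero] using
    norm_deriv_sub_deriv_zero_le (analyticOnNhd_testFn ha) hα0 hα1
      (fun _ hz => zygS_testFn_le hα0 ha hz) hw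

end testFn

section boundedness

variable {α β : ℝ} {g φ : ℂ → ℂ}

lemma memHv_deriv_of_boundedOp (hφ : AnalyticOnNhd ℂ φ uD) (hφm : MapsTo φ uD uD)
    (hg : AnalyticOnNhd ℂ g uD) (hT : boundedOp α β (VgCphi g φ)) : memHv β (deriv g) := by
  have hid : memZ α fun w => w := ⟨analyticOn_id, 0, fun z _ => by simp [zygS]⟩
  obtain ⟨-, M, hM⟩ := hT.1 _ hid
  refine ⟨M, fun z hz => ?_⟩
  have := hM z hz
  rw [zygS, deriv_deriv_VgCphi analyticOnNhd_id hφ hφm hg hz] at this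
  simpa using this

lemma weighted_bound_of_boundedOp (hα0 : 0 ≤ α) (hα1 : α < 1) (hφ : AnalyticOnNhd ℂ φ uD)
    (hφm : MapsTo φ uD uD) (hg : AnalyticOnNhd ℂ g uD) (hT : boundedOp α β (VgCphi g φ))
    {M₁ : ℝ} (hM₁ : ∀ z ∈ uD, (1 - ‖z‖ ^ 2) ^ β * ‖deriv g z‖ ≤ M₁) :
    ∃ M : ℝ, ∀ z ∈ uD,
      (1 - ‖z‖ ^ 2) ^ β * ‖g z * deriv φ z‖ / (1 - ‖φ z‖ ^ 2) ^ α ≤ M := by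
  obtain ⟨hmaps, C, hC, hCle⟩ := hT
  set K : ℝ := 2 ^ α * 2
  refine ⟨C * K + (1 - α)⁻¹ * K * M₁, fun z hz => ?_⟩
  set a := φ z
  have ha : a ∈ uD := hφm hz
  set t := (1 - ‖z‖ ^ 2) ^ β
  have ht : 0 ≤ t := Real.rpow_nonneg (one_sub_norm_sq_pos hz).le β
  have hf : memZ α (testFn α a) := memZ_testFn hα0 ha
  have hV : zygS β (VgCphi g φ (testFn α a)) z ≤ C * K :=
    calc _ ≤ zNorm β (VgCphi g φ (testFn α a)) := zygS_le_zNorm (hmaps _ hf) hz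
      _ ≤ C * zNorm α (testFn α a) := hCle _ hf
      _ ≤ C * K := by gcongr; exact zNorm_testFn_le hα0 ha
  have hV'' : deriv (deriv (VgCphi g φ (testFn α a))) z =
      testKernel α a a * deriv φ z * g z + deriv (testFn α a) a * deriv g z := by
    rw [deriv_deriv_VgCphi (analyticOnNhd_testFn ha) hφ hφm hg hz, deriv_deriv_testFn ha ha]
  have hratio : t * ‖g z * deriv φ z‖ / (1 - ‖a‖ ^ 2) ^ α =
      t * ‖testKernel α a a * deriv φ z * g z‖ := by
    simp only [norm_mul]
    rw [norm_testKernel_self ha,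
      Real.rpow_neg (one_sub_norm_sq_pos ha).le]
    ring
  have hK : 0 ≤ (1 - α)⁻¹ * K := by
    have : 0 < 1 - α := by linarith
    positivity
  have hcorr : t * ‖deriv (testFn α a) a * deriv g z‖ ≤ (1 - α)⁻¹ * K * M₁ := by
    rw [norm_mul, mul_left_comm]
    exact mul_le_mul (norm_deriv_testFn_le hα0 hα1 ha ha) (hM₁ z hz)
      (mul_nonneg ht (norm_nonneg _)) hK
  rw [hratio]
  calc t * ‖testKernel α a a * deriv φ z * g z‖
      ≤ t * (‖testKernel α a a * deriv φ z * g z + deriv (testFn α a) a * deriv g z‖ +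
          ‖deriv (testFn α a) a * deriv g z‖) := by
        gcongr
        simpa using norm_sub_le (testKernel α a a * deriv φ z * g z +
          deriv (testFn α a) a * deriv g z) (deriv (testFn α a) a * deriv g z)
    _ = zygS β (VgCphi g φ (testFn α a)) z + t * ‖deriv (testFn α a) a * deriv g z‖ := by
        rw [zygS, hV'', mul_add]
    _ ≤ C * K + (1 - α)⁻¹ * K * M₁ := add_le_add hV hcorr

lemma zygS_VgCphi_le (hα0 : 0 ≤ α) (hα1 : α < 1) (hφ : AnalyticOnNhd ℂ φ uD)
    (hφm : MapsTo φ uD uD) (hg : AnalyticOnNhd ℂ g uD) {M₁ M₂ : ℝ}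
    (hM₁ : ∀ z ∈ uD, (1 - ‖z‖ ^ 2) ^ β * ‖deriv g z‖ ≤ M₁)
    (hM₂ : ∀ z ∈ uD, (1 - ‖z‖ ^ 2) ^ β * ‖g z * deriv φ z‖ / (1 - ‖φ z‖ ^ 2) ^ α ≤ M₂)
    {f : ℂ → ℂ} (hf : memZ α f) {z : ℂ} (hz : z ∈ uD) :
    zygS β (VgCphi g φ f) z ≤ zNorm α f * (M₂ + (1 - α)⁻¹ * M₁) := by
  have hφz := hφm hz
  set t := (1 - ‖z‖ ^ 2) ^ β
  have ht : 0 ≤ t := Real.rpow_nonneg (one_sub_norm_sq_pos hz).le β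
  have hw : 0 < (1 - ‖φ z‖ ^ 2) ^ α := Real.rpow_pos_of_pos (one_sub_norm_sq_pos hφz) α
  have hmain : t * ‖deriv (deriv f) (φ z) * deriv φ z * g z‖ ≤ M₂ * zNorm α f := by
    have hratio : 0 ≤ t * ‖g z * deriv φ z‖ / (1 - ‖φ z‖ ^ 2) ^ α := by positivity
    calc t * ‖deriv (deriv f) (φ z) * deriv φ z * g z‖
        = t * ‖g z * deriv φ z‖ / (1 - ‖φ z‖ ^ 2) ^ α * zygS α f (φ z) := by
          rw [zygS, norm_mul, norm_mul, norm_mul]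
          field_simp
      _ ≤ M₂ * zNorm α f := mul_le_mul (hM₂ z hz) (zygS_le_zNorm hf hφz) (zygS_nonneg hφz)
          (hratio.trans (hM₂ z hz))
  have hcorr : t * ‖deriv f (φ z) * deriv g z‖ ≤ (1 - α)⁻¹ * zNorm α f * M₁ := by
    rw [norm_mul, mul_left_comm]
    exact mul_le_mul (norm_deriv_le_zNorm hα0 hα1 hf hφz) (hM₁ z hz)
      (mul_nonneg ht (norm_nonneg _)) ((norm_nonneg _).trans (norm_deriv_le_zNorm hα0 hα1 hf hφz))
  rw [zygS, deriv_deriv_VgCphi ((isOpen_uD.analyticOn_iff_analyticOnNhd).1 hf.1) hφ hφm hg hz]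
  calc t * ‖deriv (deriv f) (φ z) * deriv φ z * g z + deriv f (φ z) * deriv g z‖
      ≤ t * ‖deriv (deriv f) (φ z) * deriv φ z * g z‖ + t * ‖deriv f (φ z) * deriv g z‖ := by
        rw [← mul_add]; gcongr; exact norm_add_le _ _
    _ ≤ M₂ * zNorm α f + (1 - α)⁻¹ * zNorm α f * M₁ := add_le_add hmain hcorr
    _ = zNorm α f * (M₂ + (1 - α)⁻¹ * M₁) := by ring

lemma boundedOp_VgCphi (hα0 : 0 ≤ α) (hα1 : α < 1) (hφ : AnalyticOnNhd ℂ φ uD)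
    (hφm : MapsTo φ uD uD) (hg : AnalyticOnNhd ℂ g uD) {M₁ M₂ : ℝ}
    (hM₁ : ∀ z ∈ uD, (1 - ‖z‖ ^ 2) ^ β * ‖deriv g z‖ ≤ M₁)
    (hM₂ : ∀ z ∈ uD, (1 - ‖z‖ ^ 2) ^ β * ‖g z * deriv φ z‖ / (1 - ‖φ z‖ ^ 2) ^ α ≤ M₂) :
    boundedOp α β (VgCphi g φ) := by
  set K := M₂ + (1 - α)⁻¹ * M₁
  have hinv : 0 < (1 - α)⁻¹ := inv_pos.2 (by linarith)
  have hmaps : ∀ f, memZ α f → memZ β (VgCphi g φ f) := fun f hf =>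
    ⟨(isOpen_uD.analyticOn_iff_analyticOnNhd).2 (analyticOnNhd_VgCphi
      ((isOpen_uD.analyticOn_iff_analyticOnNhd).1 hf.1) hφ hφm hg), _,
      fun _ hz => zygS_VgCphi_le hα0 hα1 hφ hφm hg hM₁ hM₂ hf hz⟩
  refine ⟨hmaps, (1 - α)⁻¹ * ‖g 0‖ + |K| + 1, by positivity, fun f hf => ?_⟩
  have hsup : sSup (zygS β (VgCphi g φ f) '' uD) ≤ zNorm α f * K :=
    csSup_le ((nonempty_of_mem zero_mem_uD).image _)
      (by rintro _ ⟨z, hz, rfl⟩; exact zygS_VgCphi_le hα0 hα1 hφ hφm hg hM₁ hM₂ hf hz)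
  have hd0 : ‖deriv (VgCphi g φ f) 0‖ ≤ (1 - α)⁻¹ * zNorm α f * ‖g 0‖ := by
    rw [deriv_VgCphi ((isOpen_uD.analyticOn_iff_analyticOnNhd).1 hf.1) hφ hφm hg zero_mem_uD,
      norm_mul]
    exact mul_le_mul_of_nonneg_right (norm_deriv_le_zNorm hα0 hα1 hf (hφm zero_mem_uD))
      (norm_nonneg _)
  have hN := zNorm_nonneg α f
  calc zNorm β (VgCphi g φ f)
      = ‖deriv (VgCphi g φ f) 0‖ + sSup (zygS β (VgCphi g φ f) '' uD) := by
        rw [zNorm, VgCphi_zero, norm_zero, zero_add]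
    _ ≤ (1 - α)⁻¹ * zNorm α f * ‖g 0‖ + zNorm α f * K := add_le_add hd0 hsup
    _ ≤ ((1 - α)⁻¹ * ‖g 0‖ + |K| + 1) * zNorm α f := by
        nlinarith [le_abs_self K, mul_le_mul_of_nonneg_left (le_abs_self K) hN]

end boundedness

theorem stmt_0_general (α β : ℝ) (hα0 : 0 < α) (hα1 : α < 1)
    (φ g : ℂ → ℂ) (hφ : AnalyticOn ℂ φ uD) (hφm : Set.MapsTo φ uD uD)
    (hg : AnalyticOn ℂ g uD) :
    boundedOp α β (VgCphi g φ) ↔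
      (memHv β (deriv g) ∧ (∃ M : ℝ, ∀ z ∈ uD, (1 - ‖z‖ ^ 2) ^ β * ‖g z * deriv φ z‖ / (1 - ‖φ z‖ ^ 2) ^ α ≤ M)) := by
  rw [isOpen_uD.analyticOn_iff_analyticOnNhd] at hφ hg
  constructor
  · intro hT
    obtain ⟨M₁, hM₁⟩ := memHv_deriv_of_boundedOp hφ hφm hg hT
    exact ⟨⟨M₁, hM₁⟩, weighted_bound_of_boundedOp hα0.le hα1 hφ hφm hg hT hM₁⟩
  · rintro ⟨⟨M₁, hM₁⟩, M₂, hM₂⟩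
    exact boundedOp_VgCphi hα0.le hα1 hφ hφm hg hM₁ hM₂

theorem stmt_0 (α β : ℝ) (hα0 : 0 < α) (hα1 : α < 1) (hβ : 0 < β)
    (φ g : ℂ → ℂ) (hφ : AnalyticOn ℂ φ uD) (hφm : Set.MapsTo φ uD uD)
    (hg : AnalyticOn ℂ g uD) :
    boundedOp α β (VgCphi g φ) ↔
      (memHv β (deriv g) ∧ (∃ M : ℝ, ∀ z ∈ uD, (1 - ‖z‖ ^ 2) ^ β * ‖g z * deriv φ z‖ / (1 - ‖φ z‖ ^ 2) ^ α ≤ M)) :=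
  stmt_0_general α β hα0 hα1 φ g hφ hφm hg

end
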